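/- Let A be a self-adjoint operator on a Hilbert space H with A ≥ I, and let s > -1. Then A^{-s/2} maps B(A) homeomorphically onto B(A^{1+s}), and there is a constant C = C(s) > 0, independent of A, such that ‖A^{-s/2} u‖_{B(A^{1+s})} ≤ C ‖u‖_{B(A)} for all u ∈ B(A) and ‖A^{s/2} v‖_{B(A)} ≤ C ‖v‖_{B(A^{1+s})} for all v ∈ B(A^{1+s}). -/

import Mathlib

open MeasureTheory Filter Topology
open scoped ENNReal

noncomputable section

/-- The dyadic radii: `R_0 = 0`, `R_j = 2^(j-1)` for `j ≥ 1`
(here indexed so that `dyadicR (k+1) = 2^k`). -/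
def dyadicR : ℕ → ℝ
  | 0 => 0
  | k + 1 => 2 ^ k

/-- For the self-adjoint multiplication operator by the real function `a` on `L²(μ)`,
the norm of the spectral block `F(R_k ≤ |A| < R_{k+1}) u`, i.e. of the restriction of
`u` to `{R_k ≤ |a| < R_{k+1}}`, valued in `ℝ≥0∞`. -/
def blockE {α : Type*} [MeasurableSpace α] (μ : Measure α) (a : α → ℝ) (u : α → ℂ)
    (k : ℕ) : ℝ≥0∞ :=
  eLpNorm (Set.indicator {x | dyadicR k ≤ |a x| ∧ |a x| < dyadicR (k + 1)} u) 2 μ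

/-- The Besov norm `‖u‖_{B(a)} = Σ_j R_j^{1/2} ‖F_j u‖` of the multiplication
operator by `a` on `L²(μ)`, valued in `ℝ≥0∞`; `u ∈ B(a)` iff this is finite. -/
def besovE {α : Type*} [MeasurableSpace α] (μ : Measure α) (a : α → ℝ) (u : α → ℂ) :
    ℝ≥0∞ :=
  ∑' k : ℕ, ENNReal.ofReal (Real.sqrt (dyadicR (k + 1))) * blockE μ a u k

/-- The dual Besov norm `‖u‖_{B(a)*} = sup_j R_j^{-1/2} ‖F_j u‖`, valued in `ℝ≥0∞`. -/
def dualE {α : Type*} [MeasurableSpace α] (μ : Measure α) (a : α → ℝ) (u : α → ℂ) :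
    ℝ≥0∞ :=
  ⨆ k : ℕ, (ENNReal.ofReal (Real.sqrt (dyadicR (k + 1))))⁻¹ * blockE μ a u k

/-! On the shell `2^(k-1) ≤ A < 2^k` of `A ≥ 1`, the operator `A^((1-T)/2)` is comparable to
`2^(k(1-T)/2)` and `A^T < 2^(kT)`, so this shell only meets the shells `2^(j-1) ≤ A^T < 2^j` with
`j ≲ kT`. Splitting each `B(A^T)`-block along the shells of `A` (an orthogonal decomposition in
`L²`), the weights `2^(j/2)` of those blocks sum geometrically to `≲ 2^(kT/2)`, and
`2^(kT/2) · 2^(k(1-T)/2) = 2^(k/2)` is the weight of the `k`-th block in `B(A)`. Hence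
`A^((1-T)/2) : B(A) → B(A^T)` is bounded for every `T > 0`, uniformly in `A`; the two estimates
are the cases `T = 1 + s` for `A` and `T = (1 + s)⁻¹` for `A^(1+s)`. -/

open Set
open scoped Function

lemma dyadicR_succ (k : ℕ) : dyadicR (k + 1) = 2 ^ k := rfl

lemma monotone_dyadicR : Monotone dyadicR := by
  refine monotone_nat_of_le_succ fun k => ?_
  cases k with
  | zero => simp [dyadicR]
  | succ n => simp only [dyadicR]; exact pow_le_pow_right₀ one_le_two n.le_succ

lemma dyadicR_succ_le_two_mul {k : ℕ} {y : ℝ} (hy : 1 ≤ y) (hk : dyadicR k ≤ y) :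
    dyadicR (k + 1) ≤ 2 * y := by
  cases k with
  | zero => simp only [dyadicR_succ, pow_zero]; linarith
  | succ n => rw [dyadicR_succ, pow_succ', ← dyadicR_succ]; linarith

lemma exists_dyadicR_le_lt {y : ℝ} (hy : 0 ≤ y) :
    ∃ n, dyadicR n ≤ y ∧ y < dyadicR (n + 1) := by
  rcases lt_or_ge y 1 with hy1 | hy1
  · exact ⟨0, hy, by simpa [dyadicR] using hy1⟩
  · obtain ⟨n, hn, hn'⟩ := exists_nat_pow_near hy1 one_lt_two
    exact ⟨n + 1, hn, hn'⟩

lemma sqrt_dyadicR_succ (k : ℕ) : √(dyadicR (k + 1)) = √2 ^ k := by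
  rw [dyadicR_succ, ← Real.sqrt_sq (by positivity : 0 ≤ √2 ^ k), ← pow_mul, mul_comm, pow_mul,
    Real.sq_sqrt zero_le_two]

lemma sum_range_sqrt_dyadicR_succ_le {n : ℕ} {y : ℝ} (hy : 1 ≤ y) (hn : dyadicR n ≤ y) :
    ∑ j ∈ Finset.range (n + 1), √(dyadicR (j + 1)) ≤ 2 / (√2 - 1) * √y := by
  have htop : √2 ^ (n + 1) ≤ 2 * √y := by
    calc √2 ^ (n + 1) = √2 * √(dyadicR (n + 1)) := by rw [sqrt_dyadicR_succ, pow_succ']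
      _ ≤ √2 * √(2 * y) := by gcongr; exact dyadicR_succ_le_two_mul hy hn
      _ = 2 * √y := by rw [Real.sqrt_mul zero_le_two, ← mul_assoc, Real.mul_self_sqrt zero_le_two]
  simp only [sqrt_dyadicR_succ]
  rw [geom_sum_eq Real.one_lt_sqrt_two.ne', div_eq_mul_inv, div_eq_mul_inv, mul_right_comm]
  have hs2 := Real.one_lt_sqrt_two
  gcongr
  linarith

section Shells

variable {α : Type*}

def dyadicShell (d : α → ℝ) (k : ℕ) : Set α :=
  {x | dyadicR k ≤ |d x| ∧ |d x| < dyadicR (k + 1)}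

lemma measurableSet_dyadicShell [MeasurableSpace α] {d : α → ℝ} (hd : Measurable d) (k : ℕ) :
    MeasurableSet (dyadicShell d k) :=
  hd.abs measurableSet_Ico

lemma pairwise_disjoint_dyadicShell (d : α → ℝ) : Pairwise (Disjoint on dyadicShell d) := by
  refine pairwise_disjoint_on _ |>.mpr fun k l hkl => Set.disjoint_left.mpr ?_
  rintro x ⟨-, hxk⟩ ⟨hxl, -⟩
  exact (hxk.trans_le (monotone_dyadicR hkl)).not_ge hxl

lemma iUnion_dyadicShell (d : α → ℝ) : ⋃ k, dyadicShell d k = univ :=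
  eq_univ_of_forall fun x => mem_iUnion.mpr (exists_dyadicR_le_lt (abs_nonneg (d x)))

lemma mem_dyadicShell_of_one_le {d : α → ℝ} {k : ℕ} {x : α} (hx : x ∈ dyadicShell d k)
    (hdx : 1 ≤ d x) : dyadicR (k + 1) / 2 ≤ d x ∧ d x < dyadicR (k + 1) := by
  obtain ⟨hlo, hhi⟩ := hx
  rw [abs_of_pos (by linarith)] at hlo hhi
  exact ⟨by linarith [dyadicR_succ_le_two_mul hdx hlo], hhi⟩

lemma dyadicShell_inter_dyadicShell_rpow_eq_empty {d : α → ℝ} {T : ℝ} (hd1 : ∀ x, 1 ≤ d x)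
    (hT : 0 < T) {j k : ℕ} (hjk : dyadicR (k + 1) ^ T ≤ dyadicR j) :
    dyadicShell d k ∩ dyadicShell (fun x => d x ^ T) j = ∅ := by
  refine eq_empty_of_forall_notMem fun x hx => ?_
  obtain ⟨hxk, hxj, -⟩ := hx
  have hdx : 0 < d x := by linarith [hd1 x]
  rw [abs_of_pos (Real.rpow_pos_of_pos hdx T)] at hxj
  have := Real.rpow_lt_rpow hdx.le (mem_dyadicShell_of_one_le hxk (hd1 x)).2 hT
  linarith

end Shells

lemma ENNReal.tsum_sq_le_sq_tsum {ι : Type*} (x : ι → ℝ≥0∞) :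
    ∑' k, x k ^ 2 ≤ (∑' k, x k) ^ 2 :=
  calc ∑' k, x k ^ 2 ≤ ∑' k, x k * ∑' l, x l :=
        ENNReal.tsum_le_tsum fun k => by rw [sq]; gcongr; exact ENNReal.le_tsum k
    _ = (∑' k, x k) ^ 2 := by rw [ENNReal.tsum_mul_right, sq]

lemma eLpNorm_two_le_tsum_eLpNorm_indicator {α ι E : Type*} [MeasurableSpace α] [Countable ι]
    [NormedAddCommGroup E] {μ : Measure α} {D : ι → Set α} (hD : ∀ k, MeasurableSet (D k))
    (hdisj : Pairwise (Disjoint on D)) (hcover : ⋃ k, D k = univ) (f : α → E) :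
    eLpNorm f 2 μ ≤ ∑' k, eLpNorm ((D k).indicator f) 2 μ := by
  have hsq : ∀ ν : Measure α, eLpNorm f 2 ν ^ 2 = ∫⁻ x, ‖f x‖ₑ ^ 2 ∂ν := fun ν => by
    simpa using eLpNorm_nnreal_pow_eq_lintegral (f := f) (μ := ν) (p := 2) two_ne_zero
  have hsplit : eLpNorm f 2 μ ^ 2 = ∑' k, eLpNorm ((D k).indicator f) 2 μ ^ 2 := by
    simp_rw [eLpNorm_indicator_eq_eLpNorm_restrict (hD _), hsq, ← lintegral_iUnion hD hdisj,
      hcover, Measure.restrict_univ]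
  rw [← ENNReal.pow_le_pow_left_iff two_ne_zero, hsplit]
  exact ENNReal.tsum_sq_le_sq_tsum _

lemma rpow_le_two_rpow_abs_mul_rpow {R y : ℝ} (hR : 0 < R) (hlo : R / 2 ≤ y) (hhi : y ≤ R)
    (e : ℝ) : y ^ e ≤ 2 ^ |e| * R ^ e := by
  have hy : 0 < y := by linarith
  rcases le_or_gt 0 e with he | he
  · calc y ^ e ≤ R ^ e := Real.rpow_le_rpow hy.le hhi he
      _ ≤ 2 ^ |e| * R ^ e :=
        le_mul_of_one_le_left (by positivity) (Real.one_le_rpow one_le_two (abs_nonneg e))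
  · calc y ^ e ≤ (R / 2) ^ e := Real.rpow_le_rpow_of_nonpos (by positivity) hlo he.le
      _ = 2 ^ |e| * R ^ e := by
        rw [Real.div_rpow hR.le zero_le_two, abs_of_neg he, Real.rpow_neg zero_le_two]
        ring

lemma eLpNorm_indicator_indicator_smul_le {α E : Type*} [MeasurableSpace α]
    [NormedAddCommGroup E] [NormedSpace ℝ E] (μ : Measure α) {D S : Set α} {g : α → ℝ}
    {M : ℝ} (hg : ∀ x ∈ D, |g x| ≤ M) (u : α → E) (p : ℝ≥0∞) :
    eLpNorm (D.indicator (S.indicator fun x => g x • u x)) p μ ≤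
      ENNReal.ofReal M * eLpNorm (D.indicator u) p μ := by
  refine eLpNorm_le_mul_eLpNorm_of_ae_le_mul (ae_of_all _ fun x => ?_) p
  by_cases hxD : x ∈ D
  · simp only [indicator_of_mem hxD]
    by_cases hxS : x ∈ S
    · rw [indicator_of_mem hxS, norm_smul, Real.norm_eq_abs]
      exact mul_le_mul_of_nonneg_right (hg x hxD) (norm_nonneg _)
    · rw [indicator_of_notMem hxS, norm_zero]
      exact mul_nonneg ((abs_nonneg _).trans (hg x hxD)) (norm_nonneg _)
  · simp [indicator_of_notMem hxD]

/-- `2 / (√2 - 1)` bounds the geometric sum of the `B(A^T)` weights, `2 ^ |(1 - T) / 2|` the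
oscillation of `A^((1-T)/2)` on a dyadic shell of `A`. -/
def rpowBesovConst (T : ℝ) : ℝ := 2 * 2 ^ |(1 - T) / 2| / (√2 - 1)

lemma rpowBesovConst_pos (T : ℝ) : 0 < rpowBesovConst T := by
  unfold rpowBesovConst
  exact div_pos (by positivity) (by linarith [Real.one_lt_sqrt_two])

lemma rpowBesovConst_mul_sqrt {R : ℝ} (hR : 0 < R) (T : ℝ) :
    rpowBesovConst T * √R = 2 / (√2 - 1) * √(R ^ T) * (2 ^ |(1 - T) / 2| * R ^ ((1 - T) / 2)) := by
  have hexp : √(R ^ T) * R ^ ((1 - T) / 2) = √R := by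
    rw [Real.sqrt_eq_rpow, Real.sqrt_eq_rpow, ← Real.rpow_mul hR.le, ← Real.rpow_add hR]
    congr 1
    ring
  rw [rpowBesovConst, ← hexp]
  ring

lemma tsum_blockE_rpow_smul_le {α : Type*} [MeasurableSpace α] (μ : Measure α) {d : α → ℝ}
    {T : ℝ} (hd1 : ∀ x, 1 ≤ d x) (hT : 0 < T) (u : α → ℂ) (k : ℕ) :
    ∑' j, ENNReal.ofReal √(dyadicR (j + 1)) *
        eLpNorm ((dyadicShell d k).indicator ((dyadicShell (fun x => d x ^ T) j).indicator
          fun x => (d x ^ ((1 - T) / 2) : ℝ) • u x)) 2 μ ≤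
      ENNReal.ofReal (rpowBesovConst T) *
        (ENNReal.ofReal √(dyadicR (k + 1)) * blockE μ d u k) := by
  set R := dyadicR (k + 1)
  set e := (1 - T) / 2
  have hR1 : 1 ≤ R := one_le_pow₀ one_le_two
  have hR : 0 < R := by linarith
  have hRT : 1 ≤ R ^ T := Real.one_le_rpow hR1 hT.le
  obtain ⟨n, hn, hn'⟩ := exists_dyadicR_le_lt (zero_le_one.trans hRT)
  have hvanish : ∀ j ∉ Finset.range (n + 1), ENNReal.ofReal √(dyadicR (j + 1)) *
      eLpNorm ((dyadicShell d k).indicator ((dyadicShell (fun x => d x ^ T) j).indicator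
        fun x => (d x ^ e : ℝ) • u x)) 2 μ = 0 := fun j hj => by
    have hjn : n + 1 ≤ j := by simpa using hj
    rw [indicator_indicator, dyadicShell_inter_dyadicShell_rpow_eq_empty hd1 hT
      (hn'.le.trans (monotone_dyadicR hjn)), indicator_empty, eLpNorm_zero', mul_zero]
  have hweight : ∀ x ∈ dyadicShell d k, |d x ^ e| ≤ 2 ^ |e| * R ^ e := fun x hx => by
    obtain ⟨hlo, hhi⟩ := mem_dyadicShell_of_one_le hx (hd1 x)
    rw [abs_of_pos (Real.rpow_pos_of_pos (by linarith) e)]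
    exact rpow_le_two_rpow_abs_mul_rpow hR hlo hhi.le e
  calc _ = ∑ j ∈ Finset.range (n + 1), ENNReal.ofReal √(dyadicR (j + 1)) *
        eLpNorm ((dyadicShell d k).indicator ((dyadicShell (fun x => d x ^ T) j).indicator
          fun x => (d x ^ e : ℝ) • u x)) 2 μ := tsum_eq_sum hvanish
    _ ≤ ∑ j ∈ Finset.range (n + 1), ENNReal.ofReal √(dyadicR (j + 1)) *
        (ENNReal.ofReal (2 ^ |e| * R ^ e) * blockE μ d u k) := by
      gcongr
      exact eLpNorm_indicator_indicator_smul_le μ hweight u 2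
    _ = ENNReal.ofReal (∑ j ∈ Finset.range (n + 1), √(dyadicR (j + 1))) *
        (ENNReal.ofReal (2 ^ |e| * R ^ e) * blockE μ d u k) := by
      rw [← Finset.sum_mul, ENNReal.ofReal_sum_of_nonneg fun j _ => Real.sqrt_nonneg _]
    _ ≤ ENNReal.ofReal (2 / (√2 - 1) * √(R ^ T)) *
        (ENNReal.ofReal (2 ^ |e| * R ^ e) * blockE μ d u k) := by
      gcongr
      exact sum_range_sqrt_dyadicR_succ_le hRT hn
    _ = _ := by
      have hgeom : 0 ≤ 2 / (√2 - 1) * √(R ^ T) := mul_nonneg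
        (div_nonneg zero_le_two (by linarith [Real.one_lt_sqrt_two])) (Real.sqrt_nonneg _)
      rw [← mul_assoc, ← mul_assoc, ← ENNReal.ofReal_mul hgeom,
        ← ENNReal.ofReal_mul (rpowBesovConst_pos T).le, rpowBesovConst_mul_sqrt hR]

theorem besovE_rpow_smul_le {α : Type*} [MeasurableSpace α] (μ : Measure α) {d : α → ℝ}
    (hd : Measurable d) (hd1 : ∀ x, 1 ≤ d x) {T : ℝ} (hT : 0 < T) (u : α → ℂ) :
    besovE μ (fun x => d x ^ T) (fun x => (d x ^ ((1 - T) / 2) : ℝ) • u x) ≤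
      ENNReal.ofReal (rpowBesovConst T) * besovE μ d u := by
  set w := fun x => (d x ^ ((1 - T) / 2) : ℝ) • u x
  set c := fun x => d x ^ T
  calc besovE μ c w
      = ∑' j, ENNReal.ofReal √(dyadicR (j + 1)) *
          eLpNorm ((dyadicShell c j).indicator w) 2 μ := rfl
    _ ≤ ∑' j, ENNReal.ofReal √(dyadicR (j + 1)) *
          ∑' k, eLpNorm ((dyadicShell d k).indicator ((dyadicShell c j).indicator w)) 2 μ := by
      gcongr
      exact eLpNorm_two_le_tsum_eLpNorm_indicator (measurableSet_dyadicShell hd)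
        (pairwise_disjoint_dyadicShell d) (iUnion_dyadicShell d) _
    _ = ∑' k, ∑' j, ENNReal.ofReal √(dyadicR (j + 1)) *
          eLpNorm ((dyadicShell d k).indicator ((dyadicShell c j).indicator w)) 2 μ := by
      simp_rw [← ENNReal.tsum_mul_left]
      exact ENNReal.tsum_comm
    _ ≤ ∑' k, ENNReal.ofReal (rpowBesovConst T) *
          (ENNReal.ofReal √(dyadicR (k + 1)) * blockE μ d u k) :=
      ENNReal.tsum_le_tsum (tsum_blockE_rpow_smul_le μ hd1 hT u)
    _ = ENNReal.ofReal (rpowBesovConst T) * besovE μ d u := ENNReal.tsum_mul_left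

/-- for a self-adjoint operator `A ≥ I` (modelled, up to unitary
equivalence, as multiplication by a measurable function `a ≥ 1` on `L²(μ)`) and
`s > -1`, the operator `A^{-s/2}` maps `B(A)` homeomorphically onto `B(A^{1+s})`:
there is `C = C(s) > 0`, independent of `A`, with
`‖A^{-s/2} u‖_{B(A^{1+s})} ≤ C ‖u‖_{B(A)}` and `‖A^{s/2} v‖_{B(A)} ≤ C ‖v‖_{B(A^{1+s})}`. -/
theorem stmt4 (s : ℝ) (hs : -1 < s) :
    ∃ C > (0 : ℝ), ∀ (α : Type) (_ : MeasurableSpace α) (μ : Measure α) (a : α → ℝ),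
      Measurable a → (∀ x, 1 ≤ a x) →
      (∀ u : α → ℂ,
        besovE μ (fun x => a x ^ (1 + s)) (fun x => (a x ^ (-(s / 2)) : ℝ) • u x) ≤
          ENNReal.ofReal C * besovE μ a u) ∧
      (∀ v : α → ℂ,
        besovE μ a (fun x => (a x ^ (s / 2) : ℝ) • v x) ≤
          ENNReal.ofReal C * besovE μ (fun x => a x ^ (1 + s)) v) := by
  have ht : 0 < 1 + s := by linarith
  refine ⟨max (rpowBesovConst (1 + s)) (rpowBesovConst (1 + s)⁻¹),
    lt_max_of_lt_left (rpowBesovConst_pos _), fun α _ μ a ha ha1 => ⟨fun u => ?_, fun v => ?_⟩⟩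
  · calc _ ≤ ENNReal.ofReal (rpowBesovConst (1 + s)) * besovE μ a u := by
          simpa only [show (1 - (1 + s)) / 2 = -(s / 2) by ring] using
            besovE_rpow_smul_le μ ha ha1 ht u
      _ ≤ _ := by gcongr; exact le_max_left _ _
  · have ha0 : ∀ x, 0 ≤ a x := fun x => zero_le_one.trans (ha1 x)
    have hinv : ∀ x, (a x ^ (1 + s)) ^ (1 + s)⁻¹ = a x :=
      fun x => Real.rpow_rpow_inv (ha0 x) ht.ne'
    have hweight : ∀ x, (a x ^ (1 + s)) ^ ((1 - (1 + s)⁻¹) / 2) = a x ^ (s / 2) := fun x => by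
      rw [← Real.rpow_mul (ha0 x)]
      congr 1
      field_simp
      ring
    calc _ ≤ ENNReal.ofReal (rpowBesovConst (1 + s)⁻¹) *
          besovE μ (fun x => a x ^ (1 + s)) v := by
          simpa only [hinv, hweight] using besovE_rpow_smul_le μ (ha.pow_const (1 + s))
            (fun x => Real.one_le_rpow (ha1 x) ht.le) (inv_pos.mpr ht) v
      _ ≤ _ := by gcongr; exact le_max_right _ _
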